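/- The symmetric bilinear form B on 𝔭_A ≅ V × ℝ × ℝ defined by B((v,a,b),(v',a',b')) = ⟨v,v'⟩ + a·b' + a'·b is invariant under the action of 𝔨_A: for every α ∈ V and all x, y ∈ 𝔭_A one has B([(0,α,0,0), x], y) + B(x, [(0,α,0,0), y]) = 0, where the brackets [(0,α,0,0), x] and [(0,α,0,0), y] lie in 𝔭_A and are identified with elements of V × ℝ × ℝ. -/
import Mathlib

open scoped RealInnerProductSpace

def cwBracket {V : Type*} [NormedAddCommGroup V] [InnerProductSpace ℝ V]
    (A : V →ₗ[ℝ] V) (x y : V × V × ℝ × ℝ) : V × V × ℝ × ℝ :=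
  (x.2.2.2 • A y.2.1 - y.2.2.2 • A x.2.1,
   x.2.2.2 • y.1 - y.2.2.2 • x.1,
   ⟪A y.1, x.2.1⟫ - ⟪A x.1, y.2.1⟫,
   0)

def cwFormP {V : Type*} [NormedAddCommGroup V] [InnerProductSpace ℝ V]
    (x y : V × ℝ × ℝ) : ℝ :=
  ⟪x.1, y.1⟫ + x.2.1 * y.2.2 + y.2.1 * x.2.2

def cwEmbP {V : Type*} [NormedAddCommGroup V] [InnerProductSpace ℝ V]
    (x : V × ℝ × ℝ) : V × V × ℝ × ℝ :=
  (x.1, 0, x.2.1, x.2.2)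

def cwProjP {V : Type*} [NormedAddCommGroup V] [InnerProductSpace ℝ V]
    (x : V × V × ℝ × ℝ) : V × ℝ × ℝ :=
  (x.1, x.2.2.1, x.2.2.2)

theorem cwFormP_invariant
    {V : Type*} [NormedAddCommGroup V] [InnerProductSpace ℝ V] [FiniteDimensional ℝ V]
    (A : V →ₗ[ℝ] V) (hA : ∀ v w : V, ⟪A v, w⟫ = ⟪v, A w⟫) :
    ∀ (α : V) (x y : V × ℝ × ℝ),
      cwFormP (cwProjP (cwBracket A (0, α, 0, 0) (cwEmbP x))) y +
        cwFormP x (cwProjP (cwBracket A (0, α, 0, 0) (cwEmbP y))) = 0 := by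
  intro α x y
  simp only [cwBracket, cwEmbP, cwProjP, cwFormP, map_zero, zero_smul, smul_zero,
    inner_zero_left, inner_zero_right, zero_sub, sub_zero, inner_neg_left,
    inner_smul_left, real_inner_smul_left]
  simp only [inner_neg_right, real_inner_smul_right, starRingEnd_apply, star_trivial]
  rw [hA x.1 α, hA α y.1, real_inner_comm (A y.1) α]
  ring
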